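/- Let a_n be the number of ordered set partitions of [n] that word-avoid 213 and have no min-descents. For n ≥ 2, a_n = a_{n-1} + sum_{k=1}^{n-1} a_k, where the first term counts those in which 1 forms a singleton block and the summand a_{n-k+1}-type terms count those in which 1 lies in a block of size ≥ 2 with 2 in position k of the word. -/

import Mathlib

/-- The word of an ordered set partition: concatenate the blocks,
listing the elements of each block in increasing order. -/
def word (π : List (Finset ℕ)) : List ℕ :=
  (π.map (fun B => Finset.sort B (· ≤ ·))).flatten

/-- `π` is an ordered set partition of `[n] = {1,…,n}`: a list of nonempty,
pairwise disjoint finsets whose union is `{1,…,n}`. -/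
def IsOSP (n : ℕ) (π : List (Finset ℕ)) : Prop :=
  (∀ B ∈ π, B.Nonempty) ∧ π.Pairwise Disjoint ∧
    π.foldr (· ∪ ·) ∅ = Finset.Icc 1 n

noncomputable def minB (B : Finset ℕ) : ℕ := sInf (B : Set ℕ)
def maxB (B : Finset ℕ) : ℕ := B.sup id

/-- number of descents of a word -/
def desCount (w : List ℕ) : ℕ :=
  ((List.range (w.length - 1)).filter (fun i => w.getD (i + 1) 0 < w.getD i 0)).length

noncomputable def mindes (π : List (Finset ℕ)) : ℕ :=
  ((List.range (π.length - 1)).filter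
    (fun i => minB (π.getD (i + 1) ∅) < minB (π.getD i ∅))).length

def maxdes (π : List (Finset ℕ)) : ℕ :=
  ((List.range (π.length - 1)).filter
    (fun i => maxB (π.getD (i + 1) ∅) < maxB (π.getD i ∅))).length

noncomputable def pdes (π : List (Finset ℕ)) : ℕ :=
  ((List.range (π.length - 1)).filter
    (fun i => maxB (π.getD (i + 1) ∅) < minB (π.getD i ∅))).length

def Avoids12 (w : List ℕ) : Prop :=
  ¬ ∃ i j : ℕ, i < j ∧ j < w.length ∧ w.getD i 0 < w.getD j 0

def Avoids21 (w : List ℕ) : Prop :=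
  ¬ ∃ i j : ℕ, i < j ∧ j < w.length ∧ w.getD j 0 < w.getD i 0

def Avoids123 (w : List ℕ) : Prop :=
  ¬ ∃ i j k : ℕ, i < j ∧ j < k ∧ k < w.length ∧
    w.getD i 0 < w.getD j 0 ∧ w.getD j 0 < w.getD k 0

def Avoids132 (w : List ℕ) : Prop :=
  ¬ ∃ i j k : ℕ, i < j ∧ j < k ∧ k < w.length ∧
    w.getD i 0 < w.getD k 0 ∧ w.getD k 0 < w.getD j 0

def Avoids213 (w : List ℕ) : Prop :=
  ¬ ∃ i j k : ℕ, i < j ∧ j < k ∧ k < w.length ∧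
    w.getD j 0 < w.getD i 0 ∧ w.getD i 0 < w.getD k 0

def Avoids312 (w : List ℕ) : Prop :=
  ¬ ∃ i j k : ℕ, i < j ∧ j < k ∧ k < w.length ∧
    w.getD j 0 < w.getD k 0 ∧ w.getD k 0 < w.getD i 0

def Avoids321 (w : List ℕ) : Prop :=
  ¬ ∃ i j k : ℕ, i < j ∧ j < k ∧ k < w.length ∧
    w.getD k 0 < w.getD j 0 ∧ w.getD j 0 < w.getD i 0

/-- reverse-complement of an ordered set partition of `[n]` -/
def rcomp (n : ℕ) (π : List (Finset ℕ)) : List (Finset ℕ) :=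
  (π.map (fun B => B.image (fun a => n + 1 - a))).reverse

/-- `aSeq n` is the number of ordered set partitions of `[n]` word-avoiding
`213` with no min-descents. -/
noncomputable def aSeq (n : ℕ) : ℕ :=
  Nat.card {π : List (Finset ℕ) // IsOSP n π ∧ Avoids213 (word π) ∧ mindes π = 0}

/-!
Call an ordered set partition admissible when its word avoids `213` and its block minima increase.
In an admissible partition of `[n]` the letter `1` lies in the first block `B`. If `2 ∈ B`, deleting
`1` and shifting all letters down leaves an admissible partition of `[n - 1]`. Otherwise `2` starts
the second block, and since `x 2 y` with `x ∈ B \ {1}` and `x < y` would be a `213`, `B \ {1}` is a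
top interval `[k + 2, n]` with `1 ≤ k ≤ n - 1`; the remaining blocks form an admissible partition of
`{2, …, k + 1}`, i.e. a shifted one of `[k]`.
-/

open scoped List

def Av213 (w : List ℕ) : Prop :=
  ∀ a b c : ℕ, [a, b, c] <+ w → ¬ (b < a ∧ a < c)

theorem avoids213_iff_av213 (w : List ℕ) : Avoids213 w ↔ Av213 w := by
  constructor
  · intro h a b c hsub ⟨h1, h2⟩
    apply h
    obtain ⟨is, his, hp⟩ := List.sublist_eq_map_getElem hsub
    match is, his with
    | [i, j, k], his =>
      simp only [List.map, List.cons.injEq, and_true, Fin.getElem_fin] at his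
      obtain ⟨rfl, rfl, rfl⟩ := his
      have hij : i < j := (List.pairwise_cons.mp hp).1 j (by simp)
      have hjk : j < k := (List.pairwise_cons.mp (List.pairwise_cons.mp hp).2).1 k (by simp)
      refine ⟨i, j, k, hij, hjk, k.isLt, ?_, ?_⟩ <;>
        simpa only [List.getD_eq_getElem, Fin.is_lt]
  · rintro h ⟨i, j, k, hij, hjk, hk, h1, h2⟩
    have hsub : [w[i], w[j], w[k]] <+ w := by
      simpa using List.map_getElem_sublist (l := w)
        (is := [⟨i, by omega⟩, ⟨j, by omega⟩, ⟨k, hk⟩]) (by simp [hij, hjk, hij.trans hjk])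
    refine h _ _ _ hsub ⟨?_, ?_⟩
    · simpa only [List.getD_eq_getElem _ _ (show i < w.length by omega),
        List.getD_eq_getElem _ _ (show j < w.length by omega)] using h1
    · simpa only [List.getD_eq_getElem _ _ (show i < w.length by omega),
        List.getD_eq_getElem _ _ hk] using h2

theorem Av213.sublist {v w : List ℕ} (h : Av213 w) (hvw : v <+ w) : Av213 v :=
  fun a b c hs => h a b c (hs.trans hvw)

theorem av213_map_iff {f : ℕ → ℕ} (hf : StrictMono f) {w : List ℕ} :
    Av213 (w.map f) ↔ Av213 w := by
  constructor
  · intro h a b c hs hp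
    exact h (f a) (f b) (f c) (by simpa using hs.map f) ⟨hf hp.1, hf hp.2⟩
  · rintro h _ _ _ hs hp
    obtain ⟨l, hl, he⟩ := List.sublist_map_iff.mp hs
    match l, he with
    | [a, b, c], he =>
      simp only [List.map, List.cons.injEq, and_true] at he
      obtain ⟨rfl, rfl, rfl⟩ := he
      exact h a b c hl ⟨hf.lt_iff_lt.mp hp.1, hf.lt_iff_lt.mp hp.2⟩

theorem av213_cons_iff {a : ℕ} {w : List ℕ} (ha : ∀ x ∈ w, a ≤ x) :
    Av213 (a :: w) ↔ Av213 w := by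
  refine ⟨fun h => h.sublist (List.sublist_cons_self a w), fun h x y z hs hp => ?_⟩
  rcases List.sublist_cons_iff.mp hs with hs | ⟨r, hr, hrs⟩
  · exact h x y z hs hp
  · obtain ⟨rfl, rfl⟩ : a = x ∧ r = [y, z] := by
      simp only [List.cons.injEq] at hr; exact ⟨hr.1.symm, hr.2.symm⟩
    exact absurd hp.1 (not_lt.mpr (ha y (hrs.subset (by simp))))

/-- The `3` of a `213` pattern starting in `T` cannot lie in `y`, so the whole pattern would lie
in the sorted list `T`. -/
theorem av213_append {T y : List ℕ} (hT : T.Pairwise (· ≤ ·))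
    (hgt : ∀ a ∈ T, ∀ b ∈ y, b < a) (hy : Av213 y) : Av213 (T ++ y) := by
  intro a b c hs hp
  obtain ⟨l₁, l₂, he, h1, h2⟩ := List.sublist_append_iff.mp hs
  rcases l₁ with _ | ⟨x, _ | ⟨u, _ | ⟨v, rest⟩⟩⟩
  · exact hy a b c (by simpa [he] using h2) hp
  · simp only [List.cons_append, List.nil_append, List.cons.injEq] at he
    obtain ⟨rfl, rfl⟩ := he
    exact absurd hp.2 (not_lt.mpr (hgt a (h1.subset (by simp)) c (h2.subset (by simp))).le)
  · simp only [List.cons_append, List.nil_append, List.cons.injEq] at he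
    obtain ⟨rfl, rfl, rfl⟩ := he
    exact absurd hp.2 (not_lt.mpr (hgt a (h1.subset (by simp)) c (h2.subset (by simp))).le)
  · have hl := congrArg List.length he
    simp only [List.length_cons, List.length_append, List.length_nil] at hl
    obtain rfl : rest = [] := List.length_eq_zero_iff.mp (by omega)
    have hab : x ≤ u := List.rel_of_pairwise_cons (hT.sublist h1) (by simp)
    simp only [List.cons_append, List.nil_append, List.cons.injEq] at he
    omega

theorem pair_sublist_of_pairwise {l : List ℕ} (hl : l.Pairwise (· ≤ ·)) {a b : ℕ} (hab : a < b)
    (ha : a ∈ l) (hb : b ∈ l) : [a, b] <+ l :=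
  List.sublist_of_subperm_of_pairwise
    (List.Nodup.subperm (by simp [hab.ne]) (by simp [ha, hb])) (by simp [hab.le]) hl

def IsOSPOn (s : Finset ℕ) (π : List (Finset ℕ)) : Prop :=
  (∀ B ∈ π, B.Nonempty) ∧ π.Pairwise Disjoint ∧ π.foldr (· ∪ ·) ∅ = s

section Partitions

variable {s B : Finset ℕ} {t π τ : List (Finset ℕ)}

theorem mem_foldr_union {x : ℕ} :
    x ∈ π.foldr (· ∪ ·) ∅ ↔ ∃ B ∈ π, x ∈ B := by
  induction π with
  | nil => simp
  | cons B t ih => simp [ih]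

theorem isOSPOn_nil : IsOSPOn s [] ↔ s = ∅ := by
  simp [IsOSPOn, eq_comm]

theorem isOSPOn_cons :
    IsOSPOn s (B :: t) ↔ B.Nonempty ∧ B ⊆ s ∧ IsOSPOn (s \ B) t := by
  have hdisj : (∀ C ∈ t, Disjoint B C) ↔ Disjoint B (t.foldr (· ∪ ·) ∅) := by
    simp only [Finset.disjoint_right, mem_foldr_union]
    grind
  simp only [IsOSPOn, List.mem_cons, forall_eq_or_imp, List.pairwise_cons, List.foldr_cons,
    hdisj]
  constructor
  · rintro ⟨⟨hB, hne⟩, ⟨hd, hp⟩, rfl⟩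
    exact ⟨hB, Finset.subset_union_left, hne, hp, by rw [Finset.union_sdiff_cancel_left hd]⟩
  · rintro ⟨hB, hBs, hne, hp, hu⟩
    rw [hu]
    exact ⟨⟨hB, hne⟩, ⟨Finset.disjoint_sdiff, hp⟩, Finset.union_sdiff_of_subset hBs⟩

theorem IsOSPOn.subset (h : IsOSPOn s π) (hB : B ∈ π) : B ⊆ s :=
  fun _ hx => h.2.2 ▸ mem_foldr_union.mpr ⟨B, hB, hx⟩

theorem IsOSPOn.exists_mem (h : IsOSPOn s π) {x : ℕ} (hx : x ∈ s) : ∃ B ∈ π, x ∈ B :=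
  mem_foldr_union.mp (h.2.2 ▸ hx)

theorem IsOSPOn.length_le_card (h : IsOSPOn s π) : π.length ≤ s.card := by
  induction π generalizing s with
  | nil => simp
  | cons B t ih =>
    obtain ⟨hB, hBs, ht⟩ := isOSPOn_cons.mp h
    have := Finset.card_sdiff_add_card_eq_card hBs
    have := hB.card_pos
    have := ih ht
    simp only [List.length_cons]
    omega

theorem isOSPOn_map_image_iff {f : ℕ → ℕ} (hf : Function.Injective f) :
    IsOSPOn (s.image f) (π.map (Finset.image f)) ↔ IsOSPOn s π := by
  induction π generalizing s with
  | nil => simp [isOSPOn_nil]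
  | cons B t ih =>
    rw [List.map_cons, isOSPOn_cons, isOSPOn_cons, Finset.image_nonempty,
      Finset.image_subset_image_iff hf, ← Finset.image_sdiff _ _ hf, ih]

theorem exists_map_image_eq {f : ℕ → ℕ}
    (h : ∀ B ∈ τ, B ⊆ s.image f) : ∃ σ : List (Finset ℕ), σ.map (Finset.image f) = τ := by
  induction τ with
  | nil => exact ⟨[], rfl⟩
  | cons B t ih =>
    obtain ⟨B', -, rfl⟩ := Finset.subset_image_iff.mp (h B (by simp))
    obtain ⟨σ, rfl⟩ := ih fun C hC => h C (by simp [hC])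
    exact ⟨B' :: σ, rfl⟩

theorem setOf_isOSPOn_finite (s : Finset ℕ) : {π | IsOSPOn s π}.Finite := by
  set P : Set (Finset ℕ) := ↑s.powerset
  refine ((List.finite_length_le P s.card).image (List.map Subtype.val)).subset fun π hπ => ?_
  obtain ⟨σ, rfl⟩ : π ∈ Set.range (List.map (Subtype.val : P → Finset ℕ)) := by
    rw [Set.range_list_map_coe]
    exact fun B hB => Finset.mem_powerset.mpr (IsOSPOn.subset hπ hB)
  exact ⟨σ, by simpa using IsOSPOn.length_le_card hπ, rfl⟩

end Partitions

theorem minB_mem {B : Finset ℕ} (h : B.Nonempty) : minB B ∈ B :=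
  Nat.sInf_mem (h.to_set)

theorem minB_le {B : Finset ℕ} {x : ℕ} (h : x ∈ B) : minB B ≤ x :=
  Nat.sInf_le h

theorem minB_eq_of_mem {B : Finset ℕ} {a : ℕ} (ha : a ∈ B) (h : ∀ x ∈ B, a ≤ x) : minB B = a :=
  le_antisymm (minB_le ha) (h _ (minB_mem ⟨a, ha⟩))

theorem minB_image {f : ℕ → ℕ} (hf : Monotone f) {B : Finset ℕ} (hB : B.Nonempty) :
    minB (B.image f) = f (minB B) := by
  refine minB_eq_of_mem (Finset.mem_image_of_mem f (minB_mem hB)) ?_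
  simp only [Finset.forall_mem_image]
  exact fun x hx => hf (minB_le hx)

theorem mindes_eq_zero_iff (π : List (Finset ℕ)) :
    mindes π = 0 ↔ π.IsChain (fun A B => minB A ≤ minB B) := by
  simp only [mindes, List.length_eq_zero_iff, List.filter_eq_nil_iff, List.mem_range,
    decide_eq_true_eq, not_lt, List.isChain_iff_getElem]
  refine forall_congr' fun i => ⟨fun h hi => ?_, fun h hi => ?_⟩ <;>
  · have := @h (by omega)
    rwa [List.getD_eq_getElem _ _ (by omega), List.getD_eq_getElem _ _ (by omega)] at *

theorem word_cons (B : Finset ℕ) (t : List (Finset ℕ)) :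
    word (B :: t) = B.sort (· ≤ ·) ++ word t := rfl

theorem mem_word {x : ℕ} {π : List (Finset ℕ)} : x ∈ word π ↔ ∃ B ∈ π, x ∈ B := by
  simp [word, List.mem_flatten]

theorem word_map_image {f : ℕ → ℕ} (hf : StrictMono f) (π : List (Finset ℕ)) :
    word (π.map (Finset.image f)) = (word π).map f := by
  have hsort (B : Finset ℕ) : (B.image f).sort (· ≤ ·) = (B.sort (· ≤ ·)).map f := by
    rw [← show B.map ⟨f, hf.injective⟩ = B.image f from Finset.map_eq_image _ _]
    exact ((hf.strictMonoOn B).map_finsetSort (f := ⟨f, hf.injective⟩)).symm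
  simp only [word, List.map_flatten, List.map_map, Function.comp_def, hsort]

theorem pair_sublist_word_cons {C : Finset ℕ} {t : List (Finset ℕ)} {x y : ℕ} (hx : x ∈ C)
    (hy : y ∈ word (C :: t)) (hxy : x < y) : [x, y] <+ word (C :: t) := by
  rw [word_cons] at hy ⊢
  rcases List.mem_append.mp hy with hy | hy
  · exact (pair_sublist_of_pairwise (Finset.pairwise_sort _ _) hxy
      ((Finset.mem_sort _).mpr hx) hy).trans (List.sublist_append_left _ _)
  · exact (List.singleton_sublist.mpr ((Finset.mem_sort _).mpr hx)).append
      (List.singleton_sublist.mpr hy)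

section Admissible

variable {s B : Finset ℕ} {t π : List (Finset ℕ)} {m : ℕ}

theorem IsOSPOn.mem_word_iff (h : IsOSPOn s π) {x : ℕ} : x ∈ word π ↔ x ∈ s := by
  rw [mem_word]
  exact ⟨fun ⟨_, hB, hx⟩ => h.subset hB hx, h.exists_mem⟩

theorem IsOSPOn.mem_head_of_forall_le (h : IsOSPOn s (B :: t))
    (hc : (B :: t).IsChain (fun A B => minB A ≤ minB B)) {a : ℕ} (ha : a ∈ s)
    (hmin : ∀ x ∈ s, a ≤ x) : a ∈ B := by
  obtain ⟨C, hC, haC⟩ := h.exists_mem ha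
  have hBa : minB B ≤ a := by
    rcases List.mem_cons.mp hC with rfl | hC
    · exact minB_le haC
    · exact (List.rel_of_pairwise_cons hc.pairwise hC).trans (minB_le haC)
  have hB := minB_mem (isOSPOn_cons.mp h).1
  rwa [le_antisymm hBa (hmin _ (h.subset (by simp) hB))] at hB

def Admissible (s : Finset ℕ) (π : List (Finset ℕ)) : Prop :=
  IsOSPOn s π ∧ Av213 (word π) ∧ π.IsChain (fun A B => minB A ≤ minB B)

theorem aSeq_eq_ncard (n : ℕ) : aSeq n = {π | Admissible (Finset.Icc 1 n) π}.ncard := by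
  rw [aSeq, ← Nat.card_coe_set_eq]
  exact Nat.card_congr (Equiv.subtypeEquivRight fun π => by
    rw [avoids213_iff_av213, mindes_eq_zero_iff]; rfl)

theorem setOf_admissible_finite (s : Finset ℕ) : {π | Admissible s π}.Finite :=
  (setOf_isOSPOn_finite s).subset fun _ h => h.1

theorem admissible_map_image_iff {f : ℕ → ℕ} (hf : StrictMono f) :
    Admissible (s.image f) (π.map (Finset.image f)) ↔ Admissible s π := by
  rw [Admissible, Admissible, isOSPOn_map_image_iff hf.injective, word_map_image hf,
    av213_map_iff hf, List.isChain_map]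
  refine and_congr_right fun hπ => and_congr_right fun _ => List.IsChain.iff_of_mem_imp ?_
  intro A B hA hB
  rw [minB_image hf.monotone (hπ.1 A hA), minB_image hf.monotone (hπ.1 B hB), hf.le_iff_le]

theorem setOf_admissible_image {f : ℕ → ℕ} (hf : StrictMono f) (s : Finset ℕ) :
    {τ | Admissible (s.image f) τ} = List.map (Finset.image f) '' {σ | Admissible s σ} := by
  ext τ
  refine ⟨fun hτ => ?_, ?_⟩
  · obtain ⟨σ, rfl⟩ := exists_map_image_eq fun B hB => hτ.1.subset hB
    exact ⟨σ, (admissible_map_image_iff hf).mp hτ, rfl⟩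
  · rintro ⟨σ, hσ, rfl⟩
    exact (admissible_map_image_iff hf).mpr hσ

/-- The chain condition at the first block is automatic, and a smallest letter in front of a word
cannot take part in a `213`. -/
theorem admissible_insert_cons_iff (hm : ∀ x ∈ s, m < x) (hmB : m ∉ B) :
    Admissible (insert m s) (insert m B :: t) ↔
      B ⊆ s ∧ IsOSPOn (s \ B) t ∧ Av213 (word (B :: t)) ∧
        t.IsChain (fun A B => minB A ≤ minB B) := by
  have hms : m ∉ s := fun h => lt_irrefl m (hm m h)
  have hosp : IsOSPOn (insert m s) (insert m B :: t) ↔ B ⊆ s ∧ IsOSPOn (s \ B) t := by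
    rw [isOSPOn_cons, Finset.insert_sdiff_insert, Finset.sdiff_insert_of_notMem hms,
      Finset.insert_subset_insert_iff hmB]
    simp
  have hword (hBs : B ⊆ s) : word (insert m B :: t) = m :: word (B :: t) := by
    rw [word_cons, Finset.sort_insert _ (fun x hx => (hm x (hBs hx)).le) hmB]
    rfl
  have hge (hBs : B ⊆ s) (ht : IsOSPOn (s \ B) t) : ∀ x ∈ word (B :: t), m ≤ x := by
    intro x hx
    rw [word_cons, List.mem_append, Finset.mem_sort, ht.mem_word_iff] at hx
    exact (hm x (hx.elim (hBs ·) (Finset.sdiff_subset ·))).le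
  constructor
  · rintro ⟨hosp', hav, hch⟩
    obtain ⟨hBs, ht⟩ := hosp.mp hosp'
    rw [hword hBs, av213_cons_iff (hge hBs ht)] at hav
    exact ⟨hBs, ht, hav, hch.tail⟩
  · rintro ⟨hBs, ht, hav, hch⟩
    refine ⟨hosp.mpr ⟨hBs, ht⟩, by rwa [hword hBs, av213_cons_iff (hge hBs ht)],
      List.isChain_cons.mpr ⟨fun C hC => ?_, hch⟩⟩
    have hCt := List.mem_of_mem_head? hC
    have hCmin := minB_mem (ht.1 C hCt)
    exact (minB_le (Finset.mem_insert_self m B)).trans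
      (hm _ (Finset.sdiff_subset (ht.subset hCt hCmin))).le

theorem admissible_insert_cons_iff_of_mem {a : ℕ} (hm : ∀ x ∈ s, m < x) (hmB : m ∉ B)
    (ha : a ∈ B) (hmin : ∀ x ∈ s, a ≤ x) :
    Admissible (insert m s) (insert m B :: t) ↔ Admissible s (B :: t) := by
  rw [admissible_insert_cons_iff hm hmB, Admissible, isOSPOn_cons, List.isChain_cons]
  constructor
  · rintro ⟨hBs, ht, hav, hch⟩
    refine ⟨⟨⟨a, ha⟩, hBs, ht⟩, hav, fun C hC => ?_, hch⟩
    have hCt := List.mem_of_mem_head? hC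
    exact (minB_le ha).trans
      (hmin _ (Finset.sdiff_subset (ht.subset hCt (minB_mem (ht.1 C hCt)))))
  · rintro ⟨⟨-, hBs, ht⟩, hav, -, hch⟩
    exact ⟨hBs, ht, hav, hch⟩

theorem admissible_insert_cons_iff_of_forall_lt (hm : ∀ x ∈ s, m < x) (hmB : m ∉ B)
    (hgt : ∀ x ∈ B, ∀ y ∈ s \ B, y < x) :
    Admissible (insert m s) (insert m B :: t) ↔ B ⊆ s ∧ Admissible (s \ B) t := by
  rw [admissible_insert_cons_iff hm hmB, Admissible]
  refine and_congr_right fun _ => and_congr_right fun ht => and_congr_left fun _ => ?_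
  refine ⟨fun h => h.sublist (List.sublist_append_right _ _), fun h => ?_⟩
  refine av213_append (Finset.pairwise_sort _ _) (fun x hx y hy => ?_) h
  exact hgt x ((Finset.mem_sort _).mp hx) y (ht.mem_word_iff.mp hy)

/-- If the first block misses the second smallest letter `a`, then `a` starts the next block,
and a letter `x` of the first block below a later letter `y` would give the `213` pattern
`x a y`. -/
theorem forall_lt_of_admissible_insert_cons {a : ℕ} (hm : ∀ x ∈ s, m < x) (hmB : m ∉ B)
    (h : Admissible (insert m s) (insert m B :: t)) (has : a ∈ s) (hmin : ∀ x ∈ s, a ≤ x)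
    (haB : a ∉ B) : ∀ x ∈ B, ∀ y ∈ s \ B, y < x := by
  obtain ⟨hBs, ht, hav, hch⟩ := (admissible_insert_cons_iff hm hmB).mp h
  have has' : a ∈ s \ B := Finset.mem_sdiff.mpr ⟨has, haB⟩
  obtain ⟨C, u, rfl⟩ := List.exists_cons_of_ne_nil (l := t) fun h0 => by
    rw [h0, isOSPOn_nil] at ht
    simp [ht] at has'
  have haC : a ∈ C := ht.mem_head_of_forall_le hch has' fun x hx => hmin x (Finset.sdiff_subset hx)
  intro x hx y hy
  by_contra! hxy
  have hax : a < x := (hmin x (hBs hx)).lt_of_ne (by rintro rfl; exact haB hx)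
  have hxy' : x < y := hxy.lt_of_ne (by rintro rfl; exact (Finset.mem_sdiff.mp hy).2 hx)
  refine hav x a y ?_ ⟨hax, hxy'⟩
  rw [word_cons]
  exact (List.singleton_sublist.mpr ((Finset.mem_sort _).mpr hx)).append
    (pair_sublist_word_cons haC (ht.mem_word_iff.mpr hy) (hax.trans hxy'))

theorem Admissible.exists_eq_insert_cons (hm : ∀ x ∈ s, m < x) (h : Admissible (insert m s) π) :
    ∃ B t, m ∉ B ∧ π = insert m B :: t := by
  obtain ⟨B, t, rfl⟩ := List.exists_cons_of_ne_nil (l := π) fun h0 => by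
    simpa [h0, isOSPOn_nil] using h.1
  have hmB : m ∈ B := h.1.mem_head_of_forall_le h.2.2 (Finset.mem_insert_self m s) (by
    simp only [Finset.forall_mem_insert, le_refl, true_and]
    exact fun x hx => (hm x hx).le)
  exact ⟨B.erase m, t, Finset.notMem_erase m B, by rw [Finset.insert_erase hmB]⟩

end Admissible

theorem injOn_modifyHead_insert (m : ℕ) :
    Set.InjOn (List.modifyHead (insert m)) {τ : List (Finset ℕ) | ∀ B ∈ τ.head?, m ∉ B} := by
  rintro (_ | ⟨B, t⟩) hτ (_ | ⟨B', t'⟩) hτ' h <;>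
    simp only [List.modifyHead_nil, List.modifyHead_cons, reduceCtorEq, List.cons.injEq] at h
  · rfl
  · simp only [Set.mem_ofPred_eq, List.head?_cons, Option.mem_def, Option.some.injEq,
      forall_eq'] at hτ hτ'
    rw [← Finset.erase_insert hτ, ← Finset.erase_insert hτ', h.1, h.2]

theorem eq_Icc_of_forall_lt {S : Finset ℕ} {a b : ℕ} (hS : S ⊆ Finset.Icc a b)
    (h : ∀ x ∈ S, ∀ y ∈ Finset.Icc a b \ S, y < x) : S = Finset.Icc (b + 1 - S.card) b := by
  have hcard : S.card ≤ b + 1 - a := by simpa using Finset.card_le_card hS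
  refine (Finset.eq_of_subset_of_card_le (fun z hz => ?_) (by simp; omega)).symm
  rw [Finset.mem_Icc] at hz
  by_contra hzS
  have hsub : S ⊆ Finset.Icc (z + 1) b := fun x hx => by
    have hzx := h x hx z (Finset.mem_sdiff.mpr ⟨Finset.mem_Icc.mpr ⟨by omega, hz.2⟩, hzS⟩)
    exact Finset.mem_Icc.mpr ⟨hzx, (Finset.mem_Icc.mp (hS hx)).2⟩
  have := Finset.card_le_card hsub
  simp only [Nat.card_Icc] at this
  omega

theorem ncard_setOf_admissible_Icc_two (k : ℕ) :
    {τ | Admissible (Finset.Icc 2 (k + 1)) τ}.ncard = aSeq k := by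
  have hshift : Finset.Icc 2 (k + 1) = (Finset.Icc 1 k).image (· + 1) := by
    rw [Finset.image_add_right_Icc]
  have hf : StrictMono (· + 1 : ℕ → ℕ) := fun _ _ h => Nat.add_lt_add_right h 1
  rw [aSeq_eq_ncard, hshift, setOf_admissible_image hf,
    Set.ncard_image_of_injective _ (List.map_injective_iff.mpr
      (Finset.image_injective (add_left_injective 1)))]

theorem Icc_one_eq_insert (n : ℕ) : Finset.Icc 1 (n + 1) = insert 1 (Finset.Icc 2 (n + 1)) :=
  (Finset.insert_Icc_add_one_left_eq_Icc (by omega)).symm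

theorem one_lt_of_mem_Icc_two (n : ℕ) : ∀ x ∈ Finset.Icc 2 n, 1 < x :=
  fun _ hx => (Finset.mem_Icc.mp hx).1

theorem ncard_setOf_admissible_two_mem_head {n : ℕ} (hn : 1 ≤ n) :
    {π | Admissible (Finset.Icc 1 (n + 1)) π ∧ 2 ∈ π.headD ∅}.ncard = aSeq n := by
  have hmin : ∀ x ∈ Finset.Icc 2 (n + 1), 2 ≤ x := fun x hx => (Finset.mem_Icc.mp hx).1
  have h2 : 2 ∈ Finset.Icc 2 (n + 1) := Finset.mem_Icc.mpr ⟨le_rfl, by omega⟩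
  have hpieces : {π | Admissible (Finset.Icc 1 (n + 1)) π ∧ 2 ∈ π.headD ∅} =
      List.modifyHead (insert 1) '' {τ | Admissible (Finset.Icc 2 (n + 1)) τ} := by
    ext π
    simp only [Set.mem_ofPred_eq, Set.mem_image, Icc_one_eq_insert]
    constructor
    · rintro ⟨hπ, h2π⟩
      obtain ⟨B, t, h1B, rfl⟩ := hπ.exists_eq_insert_cons (one_lt_of_mem_Icc_two _)
      have h2B : 2 ∈ B := by simpa using h2π
      exact ⟨B :: t, (admissible_insert_cons_iff_of_mem (one_lt_of_mem_Icc_two _)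
        h1B h2B hmin).mp hπ, rfl⟩
    · rintro ⟨τ, hτ, rfl⟩
      obtain ⟨B, t, rfl⟩ := List.exists_cons_of_ne_nil (l := τ) fun h0 => by
        simp [h0, isOSPOn_nil, Admissible] at hτ; omega
      have h2B : 2 ∈ B := hτ.1.mem_head_of_forall_le hτ.2.2 h2 hmin
      have h1B : 1 ∉ B := fun h1 => by
        simpa using one_lt_of_mem_Icc_two _ _ (hτ.1.subset (by simp) h1)
      exact ⟨(admissible_insert_cons_iff_of_mem (one_lt_of_mem_Icc_two _) h1B h2B
        hmin).mpr hτ, by simp [h2B]⟩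
  have hinj : Set.InjOn (List.modifyHead (insert 1))
      {τ | Admissible (Finset.Icc 2 (n + 1)) τ} := by
    refine (injOn_modifyHead_insert 1).mono ?_
    intro τ hτ B hB h1
    simpa using one_lt_of_mem_Icc_two _ _ (hτ.1.subset (List.mem_of_mem_head? hB) h1)
  rw [hpieces, hinj.ncard_image, ncard_setOf_admissible_Icc_two]

theorem ncard_setOf_admissible_head_eq {n k : ℕ} (hk : k ≤ n) :
    {π | Admissible (Finset.Icc 1 (n + 1)) π ∧
      π.headD ∅ = insert 1 (Finset.Icc (k + 2) (n + 1))}.ncard = aSeq k := by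
  have hsdiff : Finset.Icc 2 (n + 1) \ Finset.Icc (k + 2) (n + 1) = Finset.Icc 2 (k + 1) := by
    ext x
    simp only [Finset.mem_sdiff, Finset.mem_Icc]
    omega
  have h1 : 1 ∉ Finset.Icc (k + 2) (n + 1) := by simp
  have hgt : ∀ x ∈ Finset.Icc (k + 2) (n + 1),
      ∀ y ∈ Finset.Icc 2 (n + 1) \ Finset.Icc (k + 2) (n + 1), y < x := by
    simp only [hsdiff, Finset.mem_Icc]
    omega
  have hsub : Finset.Icc (k + 2) (n + 1) ⊆ Finset.Icc 2 (n + 1) :=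
    Finset.Icc_subset_Icc (by omega) le_rfl
  have hiff (t : List (Finset ℕ)) := admissible_insert_cons_iff_of_forall_lt (t := t)
    (one_lt_of_mem_Icc_two _) h1 hgt
  have hpieces : {π | Admissible (Finset.Icc 1 (n + 1)) π ∧
      π.headD ∅ = insert 1 (Finset.Icc (k + 2) (n + 1))} =
      (insert 1 (Finset.Icc (k + 2) (n + 1)) :: ·) ''
        {τ | Admissible (Finset.Icc 2 (k + 1)) τ} := by
    ext π
    simp only [Set.mem_ofPred_eq, Set.mem_image, Icc_one_eq_insert]
    constructor
    · rintro ⟨hπ, hhead⟩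
      obtain ⟨B, t, h1B, rfl⟩ := hπ.exists_eq_insert_cons (one_lt_of_mem_Icc_two _)
      obtain rfl : B = Finset.Icc (k + 2) (n + 1) := by
        rw [List.headD_cons] at hhead
        rw [← Finset.erase_insert h1B, hhead, Finset.erase_insert h1]
      exact ⟨t, hsdiff ▸ ((hiff t).mp hπ).2, rfl⟩
    · rintro ⟨t, ht, rfl⟩
      exact ⟨(hiff t).mpr ⟨hsub, hsdiff ▸ ht⟩, rfl⟩
  rw [hpieces, Set.ncard_image_of_injective _ List.cons_injective, ncard_setOf_admissible_Icc_two]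

theorem exists_head_eq_of_two_notMem_head {n : ℕ} (hn : 1 ≤ n) {π : List (Finset ℕ)}
    (h : Admissible (Finset.Icc 1 (n + 1)) π) (h2 : 2 ∉ π.headD ∅) :
    ∃ k ∈ Finset.Icc 1 n, π.headD ∅ = insert 1 (Finset.Icc (k + 2) (n + 1)) := by
  rw [Icc_one_eq_insert] at h
  obtain ⟨B, t, h1B, rfl⟩ := h.exists_eq_insert_cons (one_lt_of_mem_Icc_two _)
  have h2B : 2 ∉ B := by simpa using h2
  have hBs : B ⊆ Finset.Icc 2 (n + 1) :=
    ((admissible_insert_cons_iff (one_lt_of_mem_Icc_two _) h1B).mp h).1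
  have hB := eq_Icc_of_forall_lt hBs <| forall_lt_of_admissible_insert_cons
    (one_lt_of_mem_Icc_two _) h1B h (Finset.mem_Icc.mpr ⟨le_rfl, by omega⟩)
    (fun x hx => (Finset.mem_Icc.mp hx).1) h2B
  have hcard : B.card + 1 ≤ n := by
    have hB3 : B ⊆ Finset.Icc 3 (n + 1) := fun x hx => by
      have := Finset.mem_Icc.mp (hBs hx)
      exact Finset.mem_Icc.mpr ⟨by grind, this.2⟩
    have := Finset.card_le_card hB3
    simp only [Nat.card_Icc] at this
    omega
  refine ⟨n - B.card, Finset.mem_Icc.mpr ⟨by omega, by omega⟩, ?_⟩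
  rw [List.headD_cons]
  nth_rewrite 1 [hB]
  congr 2
  omega

theorem setOf_admissible_Icc_eq_union {n : ℕ} (hn : 1 ≤ n) :
    {π | Admissible (Finset.Icc 1 (n + 1)) π} =
      {π | Admissible (Finset.Icc 1 (n + 1)) π ∧ 2 ∈ π.headD ∅} ∪
        ⋃ k ∈ (Finset.Icc 1 n : Set ℕ), {π | Admissible (Finset.Icc 1 (n + 1)) π ∧
          π.headD ∅ = insert 1 (Finset.Icc (k + 2) (n + 1))} := by
  ext π
  simp only [Set.mem_union, Set.mem_iUnion, Set.mem_ofPred_eq, Finset.mem_coe, exists_prop]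
  constructor
  · intro h
    by_cases h2 : 2 ∈ π.headD ∅
    · exact .inl ⟨h, h2⟩
    · obtain ⟨k, hk, hhead⟩ := exists_head_eq_of_two_notMem_head hn h h2
      exact .inr ⟨k, hk, h, hhead⟩
  · rintro (⟨h, -⟩ | ⟨-, -, h, -⟩) <;> exact h

theorem eq_of_insert_one_Icc_eq {n k l : ℕ} (hk : k ≤ n) (hl : l ≤ n)
    (h : insert 1 (Finset.Icc (k + 2) (n + 1)) = insert 1 (Finset.Icc (l + 2) (n + 1))) :
    k = l := by
  have hcard := congrArg Finset.card h
  rw [Finset.card_insert_of_notMem (by simp), Finset.card_insert_of_notMem (by simp),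
    Nat.card_Icc, Nat.card_Icc] at hcard
  omega

theorem stmt18 (n : ℕ) (hn : 2 ≤ n) :
    aSeq n = aSeq (n - 1) + ∑ k ∈ Finset.Icc 1 (n - 1), aSeq k := by
  obtain ⟨n, rfl⟩ : ∃ m, n = m + 1 := ⟨n - 1, by omega⟩
  have hn1 : 1 ≤ n := by omega
  have hfin (p : List (Finset ℕ) → Prop) :
      {π | Admissible (Finset.Icc 1 (n + 1)) π ∧ p π}.Finite :=
    (setOf_admissible_finite _).subset fun _ h => h.1
  rw [Nat.add_sub_cancel, aSeq_eq_ncard, setOf_admissible_Icc_eq_union hn1,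
    Set.ncard_union_eq ?_ (hfin _) (Set.Finite.biUnion (Finset.finite_toSet _) fun _ _ => hfin _),
    (Finset.finite_toSet _).ncard_biUnion (fun _ _ => hfin _), finsum_mem_coe_finset,
    ncard_setOf_admissible_two_mem_head hn1,
    Finset.sum_congr rfl fun k hk => ncard_setOf_admissible_head_eq (Finset.mem_Icc.mp hk).2]
  · intro k hk l hl hkl
    refine Set.disjoint_left.mpr fun π hπk hπl => hkl ?_
    exact eq_of_insert_one_Icc_eq (Finset.mem_Icc.mp hk).2 (Finset.mem_Icc.mp hl).2
      (hπk.2.symm.trans hπl.2)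
  · refine Set.disjoint_left.mpr fun π hπ hπ' => ?_
    simp only [Set.mem_iUnion, Set.mem_ofPred_eq, Finset.mem_coe, exists_prop] at hπ'
    obtain ⟨k, hk, -, hhead⟩ := hπ'
    have h2 := hπ.2
    rw [hhead, Finset.mem_insert, Finset.mem_Icc] at h2
    have := (Finset.mem_Icc.mp hk).1
    omega
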